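/- arXiv:1410.0474 — 2 statements merged into one kernel-verified Lean document; each statement's English description precedes it below -/
import Mathlib

section
/- Suppose a complex number X_η satisfies X_η = T_L·X_{η−1} + T_R·X_{η+1}, where X_{η−1} = G⁻¹·A_L + G·B_L, X_{η+1} = H·A_R + H⁻¹·B_R, X_η = A_L + B_L = A_R + B_R, T_L = M_f/(1 + M_f + M_r), T_R = M_r/(1 + M_f + M_r), M_f = 1/(G + G⁻¹ − 2), M_r = 1/(H + H⁻¹ − 2), with G, H nonzero, G ≠ 1, H ≠ 1, H·G ≠ 1, and 1 + M_f + M_r ≠ 0. Then A_R·(1 − H·G) = A_L·(1+G)(1−H) + B_R·(H − G), i.e., A_R = T_AA·A_L + T_BA·B_R with T_AA = (1+G)(1−H)/(1−HG) and T_BA = (H−G)/(1−HG). -/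
/-!
Since `1 / (G + G⁻¹ - 2) = G / (G - 1)²`, clearing the denominator `1 + M_f + M_r` turns the
agent equation into `X_η = M_f (X_{η-1} - X_η) + M_r (X_{η+1} - X_η)`, and the two terms on the
right collapse to `(G B_L - A_L) / (G - 1)` and `(H A_R - B_R) / (H - 1)`. Eliminating `B_L` and
`X_η` with `X_η = A_L + B_L = A_R + B_R` leaves the stated linear relation.
-/

theorem one_div_add_inv_sub_two {K : Type*} [Field K] {g : K} (hg : g ≠ 0) :
    1 / (g + g⁻¹ - 2) = g / (g - 1) ^ 2 := by
  have : g + g⁻¹ - 2 = (g - 1) ^ 2 / g := by field_simp; ring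
  rw [this, one_div_div]

theorem div_sub_one_sq_mul_sub {K : Type*} [Field K] {g : K} (hg0 : g ≠ 0) (hg1 : g ≠ 1)
    (a b : K) : g / (g - 1) ^ 2 * (g * a + g⁻¹ * b - (a + b)) = (g * a - b) / (g - 1) := by
  have := sub_ne_zero.mpr hg1
  field_simp
  ring

theorem eq_mul_sub_add_mul_sub_of_eq {K : Type*} [Field K] {m n x y z : K}
    (hd : 1 + m + n ≠ 0) (h : x = m / (1 + m + n) * y + n / (1 + m + n) * z) :
    x = m * (y - x) + n * (z - x) := by
  field_simp at h
  linear_combination h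

theorem hard_boundary_AR_general (G H AL BL AR BR Xη Mf Mr TL TR : ℂ)
    (hG0 : G ≠ 0) (hH0 : H ≠ 0) (hG1 : G ≠ 1) (hH1 : H ≠ 1)
    (hMf : Mf = 1 / (G + G⁻¹ - 2)) (hMr : Mr = 1 / (H + H⁻¹ - 2))
    (hden : 1 + Mf + Mr ≠ 0)
    (hTL : TL = Mf / (1 + Mf + Mr)) (hTR : TR = Mr / (1 + Mf + Mr))
    (hX : Xη = TL * (G⁻¹ * AL + G * BL) + TR * (H * AR + H⁻¹ * BR))
    (hL : Xη = AL + BL) (hR : Xη = AR + BR) :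
    AR * (1 - H * G) = AL * (1 + G) * (1 - H) + BR * (H - G) := by
  rw [one_div_add_inv_sub_two hG0] at hMf
  rw [one_div_add_inv_sub_two hH0] at hMr
  rw [hTL, hTR] at hX
  have hbalance := eq_mul_sub_add_mul_sub_of_eq hden hX
  have hfront : Mf * (G⁻¹ * AL + G * BL - Xη) = (G * BL - AL) / (G - 1) := by
    rw [hMf, hL, add_comm AL, add_comm (G⁻¹ * AL)]
    exact div_sub_one_sq_mul_sub hG0 hG1 BL AL
  have hrear : Mr * (H * AR + H⁻¹ * BR - Xη) = (H * AR - BR) / (H - 1) := by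
    rw [hMr, hR]
    exact div_sub_one_sq_mul_sub hH0 hH1 AR BR
  rw [hfront, hrear] at hbalance
  have hG1' : G - 1 ≠ 0 := sub_ne_zero.mpr hG1
  have hH1' : H - 1 ≠ 0 := sub_ne_zero.mpr hH1
  field_simp at hbalance
  linear_combination hbalance + G * (1 - H) * hL + (H - 1) * hR

theorem hard_boundary_AR (G H AL BL AR BR Xη Mf Mr TL TR : ℂ)
    (hG0 : G ≠ 0) (hH0 : H ≠ 0) (hG1 : G ≠ 1) (hH1 : H ≠ 1)
    (hHG : H * G ≠ 1)
    (hMf : Mf = 1 / (G + G⁻¹ - 2)) (hMr : Mr = 1 / (H + H⁻¹ - 2))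
    (hden : 1 + Mf + Mr ≠ 0)
    (hTL : TL = Mf / (1 + Mf + Mr)) (hTR : TR = Mr / (1 + Mf + Mr))
    (hX : Xη = TL * (G⁻¹ * AL + G * BL) + TR * (H * AR + H⁻¹ * BR))
    (hL : Xη = AL + BL) (hR : Xη = AR + BR) :
    AR * (1 - H * G) = AL * (1 + G) * (1 - H) + BR * (H - G) :=
  hard_boundary_AR_general G H AL BL AR BR Xη Mf Mr TL TR hG0 hH0 hG1 hH1 hMf hMr hden hTL hTR hX hL
    hR
end

section
/- Under the hypotheses of the hard-boundary setup (same as Theorem 2's algebraic core), one also has B_L·(1 − H·G) = B_R·(1+H)(1−G) + A_L·(G − H), i.e., B_L = T_BB·B_R + T_AB·A_L with T_BB = (1+H)(1−G)/(1−HG) and T_AB = (G−H)/(1−HG). -/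
/-!
Write `M(G) = 1/(G + G⁻¹ - 2) = G/(G - 1)²`. Clearing the denominator `1 + M_f + M_r`, the
average condition says that the two excesses `M_f·(G⁻¹A_L + G B_L - X)` and
`M_r·(H A_R + H⁻¹B_R - X)` add up to `X`. After multiplying by `G - 1` and `H - 1` these
excesses become the linear expressions `G B_L - A_L` and `H A_R - B_R`, and eliminating
`X = A_L + B_L` and `A_R = X - B_R` leaves the stated relation.
-/

section Field

variable {K : Type*} [Field K]

lemma one_div_add_inv_sub_two_s15 {G : K} (hG : G ≠ 0) : 1 / (G + G⁻¹ - 2) = G / (G - 1) ^ 2 := by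
  rw [show G + G⁻¹ - 2 = (G - 1) ^ 2 / G by field_simp; ring, one_div_div]

lemma sub_one_mul_one_div_add_inv_sub_two_mul {G : K} (hG0 : G ≠ 0) (hG1 : G ≠ 1) (A B : K) :
    (G - 1) * (1 / (G + G⁻¹ - 2) * (G⁻¹ * A + G * B - (A + B))) = G * B - A := by
  have : G - 1 ≠ 0 := sub_ne_zero.mpr hG1
  rw [one_div_add_inv_sub_two_s15 hG0]
  field_simp
  ring

lemma mul_sub_add_mul_sub_eq_of_eq_weighted {X P Q a b : K} (hden : 1 + a + b ≠ 0)
    (hX : X = a / (1 + a + b) * P + b / (1 + a + b) * Q) :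
    a * (P - X) + b * (Q - X) = X := by
  rw [div_mul_eq_mul_div, div_mul_eq_mul_div, ← add_div, eq_div_iff hden] at hX
  linear_combination -hX

end Field

theorem hard_boundary_BL_general (G H AL BL AR BR Xη Mf Mr TL TR : ℂ)
    (hG0 : G ≠ 0) (hH0 : H ≠ 0) (hG1 : G ≠ 1) (hH1 : H ≠ 1)
    (hMf : Mf = 1 / (G + G⁻¹ - 2)) (hMr : Mr = 1 / (H + H⁻¹ - 2))
    (hden : 1 + Mf + Mr ≠ 0)
    (hTL : TL = Mf / (1 + Mf + Mr)) (hTR : TR = Mr / (1 + Mf + Mr))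
    (hX : Xη = TL * (G⁻¹ * AL + G * BL) + TR * (H * AR + H⁻¹ * BR))
    (hL : Xη = AL + BL) (hR : Xη = AR + BR) :
    BL * (1 - H * G) = BR * (1 + H) * (1 - G) + AL * (G - H) := by
  subst hTL hTR
  have hbalance := mul_sub_add_mul_sub_eq_of_eq_weighted hden hX
  have hleft := sub_one_mul_one_div_add_inv_sub_two_mul hG0 hG1 AL BL
  have hright := sub_one_mul_one_div_add_inv_sub_two_mul hH0 hH1 BR AR
  rw [← hMf] at hleft
  rw [← hMr] at hright
  obtain rfl : AR = AL + BL - BR := by linear_combination hL - hR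
  subst hL
  linear_combination (H - 1) * hleft + (G - 1) * hright - (G - 1) * (H - 1) * hbalance

theorem hard_boundary_BL (G H AL BL AR BR Xη Mf Mr TL TR : ℂ)
    (hG0 : G ≠ 0) (hH0 : H ≠ 0) (hG1 : G ≠ 1) (hH1 : H ≠ 1)
    (hHG : H * G ≠ 1)
    (hMf : Mf = 1 / (G + G⁻¹ - 2)) (hMr : Mr = 1 / (H + H⁻¹ - 2))
    (hden : 1 + Mf + Mr ≠ 0)
    (hTL : TL = Mf / (1 + Mf + Mr)) (hTR : TR = Mr / (1 + Mf + Mr))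
    (hX : Xη = TL * (G⁻¹ * AL + G * BL) + TR * (H * AR + H⁻¹ * BR))
    (hL : Xη = AL + BL) (hR : Xη = AR + BR) :
    BL * (1 - H * G) = BR * (1 + H) * (1 - G) + AL * (G - H) :=
  hard_boundary_BL_general G H AL BL AR BR Xη Mf Mr TL TR hG0 hH0 hG1 hH1 hMf hMr hden hTL hTR hX hL
    hR
end
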